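/- (The sum Clo_k(+) + W_k is direct.) Let k ∈ ℕ and let h : (Fin k → ZMod 12) → ZMod 12. If there exist coefficients a : Fin k → ZMod 12 with h x = ∑ i, a i * x i for all x, and h also belongs to W_k, then h is identically 0. -/
import Mathlib


/-- `Wset k` is the set of functions `w : (ZMod 12)^k → ZMod 12` taking values in
`C = {0,4,8}`, vanishing on tuples of even elements, invariant under negation, and
invariant under translation by tuples from `C` (i.e. factoring through `(ZMod 4)^k`). -/
def Wset (k : ℕ) : Set ((Fin k → ZMod 12) → ZMod 12) :=
  { w |
    (∀ x, w x ∈ ({0, 4, 8} : Set (ZMod 12))) ∧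
    (∀ x, (∀ i, Even (x i)) → w x = 0) ∧
    (∀ x, w (-x) = w x) ∧
    (∀ x c, (∀ i, c i ∈ ({0, 4, 8} : Set (ZMod 12))) → w (x + c) = w x) }

theorem stmt_5 (k : ℕ) (h : (Fin k → ZMod 12) → ZMod 12)
    (a : Fin k → ZMod 12) (ha : ∀ x, h x = ∑ i, a i * x i)
    (hW : h ∈ Wset k) :
    ∀ x, h x = 0 := by
  obtain ⟨hC, hE, _, _⟩ := hW
  have hai : ∀ i, a i = 0 := by
    intro i
    have h1 : a i ∈ ({0, 4, 8} : Set (ZMod 12)) := by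
      have := hC (Pi.single i 1)
      rwa [ha, Finset.sum_eq_single i
        (fun j _ hj => by simp [Pi.single_apply, hj])
        (fun hi => absurd (Finset.mem_univ i) hi), Pi.single_eq_same, mul_one] at this
    have h2 : 2 * a i = 0 := by
      have := hE (Pi.single i 2) (fun j => by
        rcases eq_or_ne j i with rfl | hj
        · simp
        · simp [Pi.single_apply, hj])
      rwa [ha, Finset.sum_eq_single i
        (fun j _ hj => by simp [Pi.single_apply, hj])
        (fun hi => absurd (Finset.mem_univ i) hi), Pi.single_eq_same, mul_comm] at this
    rcases h1 with h1 | h1 | h1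
    · exact h1
    · exact absurd h2 (by rw [h1]; decide)
    · exact absurd h2 (by rw [h1]; decide)
  intro x
  rw [ha]
  simp [hai]
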